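/- arXiv:2509.11505 — 5 statements merged into one kernel-verified Lean document; each statement's English description precedes it below -/
import Mathlib

section
/- Let q ∈ ℕ with q ≥ 2, let 0 < t < 1 and z > 0, and consider R_{z,t,q}(w) = z·((t + w + (q−2)tw)/(1 + (q−1)tw))² as a function of w ∈ [0,∞). Then: (i) R_{z,t,q} is strictly increasing on [0,∞); (ii) R_{z,t,q} has at least one fixed point in [0,∞); and (iii) R_{z,t,q}([0,∞)) ⊆ [c,d] where c = z·t² and d = z·((1+(q−2)t)/((q−1)t))² satisfy 0 < c < d. -/
noncomputable section

/-- The renormalization map `R_{z,t,q}(w) = z·((t + w + (q−2)tw)/(1 + (q−1)tw))²`,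
viewed as a function of the real variable `w`. -/
def Rmap (z t q : ℝ) (w : ℝ) : ℝ :=
  z * ((t + w + (q - 2) * t * w) / (1 + (q - 1) * t * w)) ^ 2

/-- **Lemma (properties of the renormalization map, ferromagnetic case).**
For `q ≥ 2` a natural number, `0 < t < 1`, and `z > 0`:
(i) `R_{z,t,q}` is strictly increasing on `[0,∞)`;
(ii) `R_{z,t,q}` has a fixed point in `[0,∞)`;
(iii) `R_{z,t,q}([0,∞)) ⊆ [c,d]` where `c = z t²` and `d = z((1+(q−2)t)/((q−1)t))²`
satisfy `0 < c < d`. -/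
theorem renorm_map_ferromagnetic_properties
    (q : ℕ) (hq : 2 ≤ q) (t : ℝ) (ht0 : 0 < t) (ht1 : t < 1) (z : ℝ) (hz : 0 < z) :
    StrictMonoOn (Rmap z t q) (Set.Ici 0) ∧
    (∃ w ∈ Set.Ici (0 : ℝ), Rmap z t q w = w) ∧
    (0 < z * t ^ 2 ∧
      z * t ^ 2 < z * ((1 + ((q : ℝ) - 2) * t) / (((q : ℝ) - 1) * t)) ^ 2 ∧
      ∀ w ∈ Set.Ici (0 : ℝ),
        Rmap z t q w ∈
          Set.Icc (z * t ^ 2) (z * ((1 + ((q : ℝ) - 2) * t) / (((q : ℝ) - 1) * t)) ^ 2)) := by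
  have hk2 : (2:ℝ) ≤ (q:ℝ) := by exact_mod_cast hq
  set k : ℝ := (q:ℝ) with hk
  have hb : 0 < (k - 1) * t := by nlinarith
  have h1a : 0 < 1 + (k - 2) * t := by nlinarith
  have key : (k - 1) * t * t < 1 + (k - 2) * t := by nlinarith
  have hD : ∀ w : ℝ, 0 ≤ w → 0 < 1 + (k - 1) * t * w := by
    intro w hw; nlinarith [mul_nonneg hb.le hw]
  set f : ℝ → ℝ := fun w => (t + w + (k - 2) * t * w) / (1 + (k - 1) * t * w) with hf
  have hR : ∀ w : ℝ, Rmap z t q w = z * (f w) ^ 2 := fun w => rfl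
  set M : ℝ := (1 + (k - 2) * t) / ((k - 1) * t) with hM
  -- lower bound t ≤ f w
  have hflb : ∀ w : ℝ, 0 ≤ w → t ≤ f w := by
    intro w hw
    rw [hf, le_div_iff₀ (hD w hw)]
    nlinarith [mul_nonneg hw (sub_pos.mpr key).le]
  -- upper bound f w ≤ M
  have hfub : ∀ w : ℝ, 0 ≤ w → f w ≤ M := by
    intro w hw
    rw [hf, hM, div_le_div_iff₀ (hD w hw) hb]
    nlinarith [mul_nonneg hw (sub_pos.mpr key).le]
  have hfpos : ∀ w : ℝ, 0 ≤ w → 0 < f w := fun w hw => lt_of_lt_of_le ht0 (hflb w hw)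
  -- strict monotonicity of f
  have hfmono : ∀ w₁ : ℝ, 0 ≤ w₁ → ∀ w₂ : ℝ, 0 ≤ w₂ → w₁ < w₂ → f w₁ < f w₂ := by
    intro w₁ h1 w₂ h2 h12
    rw [hf, div_lt_div_iff₀ (hD w₁ h1) (hD w₂ h2)]
    nlinarith [mul_pos (sub_pos.mpr h12) (sub_pos.mpr key)]
  have hmono : StrictMonoOn (Rmap z t q) (Set.Ici 0) := by
    intro w₁ h1 w₂ h2 h12
    rw [hR, hR]
    have := hfmono w₁ h1 w₂ h2 h12
    have h1p := hfpos w₁ h1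
    exact mul_lt_mul_of_pos_left (by nlinarith) hz
  have htM : t < M := by
    rw [hM, lt_div_iff₀ hb]; nlinarith
  have hcd : z * t ^ 2 < z * M ^ 2 :=
    mul_lt_mul_of_pos_left (by nlinarith) hz
  have hbounds : ∀ w ∈ Set.Ici (0:ℝ), Rmap z t q w ∈ Set.Icc (z * t ^ 2) (z * M ^ 2) := by
    intro w hw
    have hw : (0:ℝ) ≤ w := hw
    have hlb := hflb w hw
    have hub := hfub w hw
    constructor
    · rw [hR]; apply mul_le_mul_of_nonneg_left _ hz.le; nlinarith
    · rw [hR]; apply mul_le_mul_of_nonneg_left _ hz.le; nlinarith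
  refine ⟨hmono, ?_, mul_pos hz (by positivity), hcd, hbounds⟩
  -- fixed point via IVT on [0, d] where d = z * M ^ 2
  set d : ℝ := z * M ^ 2 with hd
  have hMpos : 0 < M := lt_trans ht0 htM
  have hd0 : (0:ℝ) ≤ d := by positivity
  have hcont : ContinuousOn (fun w => Rmap z t q w - w) (Set.Icc 0 d) := by
    have : (fun w => Rmap z t q w - w) =
        fun w => z * ((t + w + (k - 2) * t * w) / (1 + (k - 1) * t * w)) ^ 2 - w := rfl
    rw [this]
    apply ContinuousOn.sub _ continuousOn_id
    apply ContinuousOn.mul continuousOn_const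
    apply ContinuousOn.pow
    exact ContinuousOn.div (by fun_prop) (by fun_prop)
      (fun w hw => (hD w hw.1).ne')
  have hg0 : 0 ≤ Rmap z t q 0 - 0 := by
    have := (hbounds 0 (Set.self_mem_Ici)).1
    have hc : 0 < z * t ^ 2 := mul_pos hz (by positivity)
    linarith
  have hgd : Rmap z t q d - d ≤ 0 := by
    have := (hbounds d hd0).2
    linarith
  have := intermediate_value_Icc' hd0 hcont
  have h0mem : (0:ℝ) ∈ Set.Icc (Rmap z t q d - d) (Rmap z t q 0 - 0) := ⟨hgd, hg0⟩
  obtain ⟨w, hw, hgw⟩ := this h0mem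
  refine ⟨w, hw.1, ?_⟩
  have hgw' : Rmap z t q w - w = 0 := by simpa using hgw
  linarith
end
end

section
/- Let q ∈ ℕ with q ≥ 2, let 0 < t < 1 and z > 0. Then either z is a fixed point of R_{z,t,q} (i.e., R_{z,t,q}(z) = z, which forces z = 1), or the orbit (R_{z,t,q}ⁿ(z))_{n≥0} converges to a fixed point w* ∈ (0,∞) of R_{z,t,q} satisfying 0 < R'_{z,t,q}(w*) ≤ 1 (i.e., to an attracting or neutral fixed point). -/
noncomputable section

/-! On `[0, ∞)` the map `R = R_{z,t,q}` is positive, strictly increasing and bounded by `z / t²`.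
Hence, unless `z` is fixed, the orbit `w_n` of `z` is strictly monotone and converges to some
`w*`, which is a fixed point by continuity. The difference quotients of `R` at `w*` along the
orbit are `(w_{n+1} - w*) / (w_n - w*)`, which lie in `(0, 1)` because the orbit approaches `w*`
monotonically from one side; so `R'(w*) ≤ 1`, while `R' > 0` on `[0, ∞)` by direct computation. -/

open Filter Topology Function Set

section Orbit

variable {α : Type*}

theorem StrictMonoOn.strictMono_iterate_of_lt_map [Preorder α] {f : α → α} {s : Set α}
    (hf : StrictMonoOn f s) (hs : MapsTo f s s) {x : α} (hx : x ∈ s) (hlt : x < f x) :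
    StrictMono fun n => f^[n] x := by
  refine strictMono_nat_of_lt_succ fun n => ?_
  induction n with
  | zero => simpa using hlt
  | succ n ih =>
    simpa only [iterate_succ_apply'] using hf (hs.iterate n hx) (hs.iterate (n + 1) hx) ih

theorem StrictMonoOn.strictAnti_iterate_of_map_lt [Preorder α] {f : α → α} {s : Set α}
    (hf : StrictMonoOn f s) (hs : MapsTo f s s) {x : α} (hx : x ∈ s) (hlt : f x < x) :
    StrictAnti fun n => f^[n] x :=
  hf.dual.strictMono_iterate_of_lt_map (α := αᵒᵈ) hs hx hlt

theorem StrictMonoOn.exists_tendsto_iterate [ConditionallyCompleteLinearOrder α]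
    [TopologicalSpace α] [OrderTopology α] {f : α → α} {s : Set α}
    (hf : StrictMonoOn f s) (hs : MapsTo f s s) (hs_below : BddBelow s) (hs_above : BddAbove s)
    {x : α} (hx : x ∈ s) (hne : f x ≠ x) :
    ∃ a, (StrictMono (fun n => f^[n] x) ∨ StrictAnti (fun n => f^[n] x)) ∧
      Tendsto (fun n => f^[n] x) atTop (𝓝 a) := by
  have horbit : range (fun n => f^[n] x) ⊆ s := range_subset_iff.2 fun n => hs.iterate n hx
  rcases hne.lt_or_gt with hlt | hgt
  · have hanti := hf.strictAnti_iterate_of_map_lt hs hx hlt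
    exact ⟨_, .inr hanti, tendsto_atTop_ciInf hanti.antitone (hs_below.mono horbit)⟩
  · have hmono := hf.strictMono_iterate_of_lt_map hs hx hgt
    exact ⟨_, .inl hmono, tendsto_atTop_ciSup hmono.monotone (hs_above.mono horbit)⟩

end Orbit

theorem HasDerivAt.le_one_of_tendsto_iterate {f : ℝ → ℝ} {f' a x : ℝ} (hf : HasDerivAt f f' a)
    (hmono : StrictMono (fun n => f^[n] x) ∨ StrictAnti (fun n => f^[n] x))
    (hlim : Tendsto (fun n => f^[n] x) atTop (𝓝 a)) :
    f' ≤ 1 := by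
  have hfix : f a = a := isFixedPt_of_tendsto_iterate hlim hf.continuousAt
  have hstep : ∀ n, slope f a (f^[n] x) = (f^[n + 1] x - a) / (f^[n] x - a) := fun n => by
    rw [slope_def_field, hfix, iterate_succ_apply']
  have horbit : ∀ n, f^[n] x ≠ a ∧ slope f a (f^[n] x) ≤ 1 := fun n => by
    rw [hstep]
    rcases hmono with hmono | hanti
    · have hle := hmono.monotone.ge_of_tendsto hlim (n + 1)
      have hlt := hmono (Nat.lt_succ_self n)
      exact ⟨by linarith, (div_le_one_of_neg (by linarith)).2 (by linarith)⟩
    · have hle := hanti.antitone.le_of_tendsto hlim (n + 1)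
      have hlt := hanti (Nat.lt_succ_self n)
      exact ⟨by linarith, (div_le_one (by linarith)).2 (by linarith)⟩
  have hlim' : Tendsto (fun n => f^[n] x) atTop (𝓝[≠] a) :=
    tendsto_nhdsWithin_of_tendsto_nhds_of_eventually_within _ hlim
      (Eventually.of_forall fun n => (horbit n).1)
  exact le_of_tendsto ((hasDerivAt_iff_tendsto_slope.mp hf).comp hlim')
    (Eventually.of_forall fun n => (horbit n).2)

-- The Möbius factor of `Rmap`; its determinant `(1 - t)(1 + (q - 1)t)` is positive for
-- `0 < t < 1`, which makes it increasing.
def renormFrac (t q w : ℝ) : ℝ :=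
  (t + w + (q - 2) * t * w) / (1 + (q - 1) * t * w)

theorem Rmap_eq (z t q : ℝ) : Rmap z t q = fun w => z * renormFrac t q w ^ 2 := rfl

section RenormFrac

variable {t q w : ℝ}

theorem hasDerivAt_renormFrac (hw : 1 + (q - 1) * t * w ≠ 0) :
    HasDerivAt (renormFrac t q)
      ((1 - t) * (1 + (q - 1) * t) / (1 + (q - 1) * t * w) ^ 2) w := by
  have h := (((hasDerivAt_id w).const_add t).add ((hasDerivAt_id w).const_mul ((q - 2) * t))).div
    (((hasDerivAt_id w).const_mul ((q - 1) * t)).const_add 1) hw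
  refine h.congr_deriv ?_
  simp only [id, Pi.add_apply]
  field_simp
  ring

theorem renormFrac_denom_pos (hq : 2 ≤ q) (ht : 0 < t) (hw : 0 ≤ w) :
    0 < 1 + (q - 1) * t * w := by
  have hq1 : 0 ≤ q - 1 := by linarith
  have : 0 ≤ (q - 1) * t * w := by positivity
  linarith

theorem renormFrac_pos (hq : 2 ≤ q) (ht : 0 < t) (hw : 0 ≤ w) : 0 < renormFrac t q w := by
  have hq2 : 0 ≤ q - 2 := by linarith
  have : 0 ≤ (q - 2) * t * w := by positivity
  exact div_pos (by linarith) (renormFrac_denom_pos hq ht hw)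

theorem renormFrac_le_inv (hq : 2 ≤ q) (ht : 0 < t) (ht1 : t ≤ 1) (hw : 0 ≤ w) :
    renormFrac t q w ≤ t⁻¹ := by
  rw [renormFrac, ← one_div, div_le_div_iff₀ (renormFrac_denom_pos hq ht hw) ht]
  have hq2 : 0 ≤ q - 2 := by linarith
  have h1t : 0 ≤ 1 - t := by linarith
  have : 0 ≤ (1 - t) * (1 + t) + (q - 2) * t * w * (1 - t) := by positivity
  linarith

theorem strictMonoOn_renormFrac (hq : 2 ≤ q) (ht : 0 < t) (ht1 : t < 1) :
    StrictMonoOn (renormFrac t q) (Ici 0) := by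
  intro w₁ hw₁ w₂ hw₂ hlt
  rw [renormFrac, renormFrac,
    div_lt_div_iff₀ (renormFrac_denom_pos hq ht hw₁) (renormFrac_denom_pos hq ht hw₂)]
  have hq1 : 0 ≤ q - 1 := by linarith
  have h1t : 0 < 1 - t := by linarith
  have hw : 0 < w₂ - w₁ := by linarith
  have : 0 < (1 - t) * (1 + (q - 1) * t) * (w₂ - w₁) := by positivity
  linarith

end RenormFrac

section Rmap

variable {z t q w : ℝ}

theorem Rmap_pos (hq : 2 ≤ q) (ht : 0 < t) (hz : 0 < z) (hw : 0 ≤ w) : 0 < Rmap z t q w :=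
  mul_pos hz (pow_pos (renormFrac_pos hq ht hw) 2)

theorem strictMonoOn_Rmap (hq : 2 ≤ q) (ht : 0 < t) (ht1 : t < 1) (hz : 0 < z) :
    StrictMonoOn (Rmap z t q) (Ici 0) := fun _ hw₁ _ hw₂ hlt =>
  mul_lt_mul_of_pos_left (pow_lt_pow_left₀ (strictMonoOn_renormFrac hq ht ht1 hw₁ hw₂ hlt)
    (renormFrac_pos hq ht hw₁).le two_ne_zero) hz

theorem mapsTo_Rmap (hq : 2 ≤ q) (ht : 0 < t) (ht1 : t ≤ 1) (hz : 0 < z) :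
    MapsTo (Rmap z t q) (Ici 0) (Icc 0 (z * t⁻¹ ^ 2)) := fun _ hw =>
  ⟨(Rmap_pos hq ht hz hw).le, mul_le_mul_of_nonneg_left
    (pow_le_pow_left₀ (renormFrac_pos hq ht hw).le (renormFrac_le_inv hq ht ht1 hw) 2) hz.le⟩

theorem hasDerivAt_Rmap (hw : 1 + (q - 1) * t * w ≠ 0) :
    HasDerivAt (Rmap z t q)
      (z * (2 * renormFrac t q w * ((1 - t) * (1 + (q - 1) * t) / (1 + (q - 1) * t * w) ^ 2)))
      w := by
  refine (((hasDerivAt_renormFrac hw).pow 2).const_mul z).congr_deriv ?_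
  norm_num

theorem deriv_Rmap_pos (hq : 2 ≤ q) (ht : 0 < t) (ht1 : t < 1) (hz : 0 < z) (hw : 0 ≤ w) :
    0 < deriv (Rmap z t q) w := by
  have hD := renormFrac_denom_pos hq ht hw
  rw [(hasDerivAt_Rmap hD.ne').deriv]
  have hfrac := renormFrac_pos hq ht hw
  have h1t : 0 < 1 - t := by linarith
  have hq1 : 0 ≤ q - 1 := by linarith
  positivity

theorem eq_one_of_Rmap_self_eq (hq : 2 ≤ q) (ht : 0 < t) (ht1 : t < 1) (hz : 0 < z)
    (h : Rmap z t q z = z) : z = 1 := by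
  have hsq : renormFrac t q z ^ 2 = 1 := by
    rw [Rmap_eq] at h
    exact mul_left_cancel₀ hz.ne' (h.trans (mul_one z).symm)
  rw [pow_eq_one_iff_of_nonneg (renormFrac_pos hq ht hz.le).le two_ne_zero, renormFrac,
    div_eq_one_iff_eq (renormFrac_denom_pos hq ht hz.le).ne'] at hsq
  have : (1 - t) * (z - 1) = 0 := by linear_combination hsq
  rcases mul_eq_zero.1 this with h | h <;> linarith

end Rmap

/-- **Lemma (dichotomy for the orbit of the marked point, ferromagnetic case).**
For `q ≥ 2` a natural number, `0 < t < 1`, and `z > 0`: either `z` is a fixed point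
of `R_{z,t,q}` (which forces `z = 1`), or the orbit of `z` under `R_{z,t,q}`
converges to a fixed point `w* ∈ (0,∞)` with `0 < R'_{z,t,q}(w*) ≤ 1`
(an attracting or neutral fixed point). -/
theorem renorm_orbit_dichotomy
    (q : ℕ) (hq : 2 ≤ q) (t : ℝ) (ht0 : 0 < t) (ht1 : t < 1) (z : ℝ) (hz : 0 < z) :
    (Rmap z t q z = z ∧ z = 1) ∨
    (∃ wstar : ℝ, 0 < wstar ∧ Rmap z t q wstar = wstar ∧
      0 < deriv (Rmap z t q) wstar ∧ deriv (Rmap z t q) wstar ≤ 1 ∧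
      Filter.Tendsto (fun n : ℕ => (Rmap z t q)^[n] z) Filter.atTop (nhds wstar)) := by
  have hq' : (2 : ℝ) ≤ q := by exact_mod_cast hq
  rcases eq_or_ne (Rmap z t q z) z with hfix | hne
  · exact .inl ⟨hfix, eq_one_of_Rmap_self_eq hq' ht0 ht1 hz hfix⟩
  set s := Icc 0 (z * t⁻¹ ^ 2)
  have hs : MapsTo (Rmap z t q) s s :=
    (mapsTo_Rmap hq' ht0 ht1.le hz).mono_left Icc_subset_Ici_self
  have hzs : z ∈ s :=
    ⟨hz.le, le_mul_of_one_le_right hz.le (one_le_pow₀ ((one_le_inv₀ ht0).2 ht1.le))⟩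
  obtain ⟨a, hmono, hlim⟩ :=
    ((strictMonoOn_Rmap hq' ht0 ht1 hz).mono Icc_subset_Ici_self).exists_tendsto_iterate hs
      bddBelow_Icc bddAbove_Icc hzs hne
  have ha : 0 ≤ a := ge_of_tendsto' hlim fun n => (hs.iterate n hzs).1
  have hderiv := hasDerivAt_Rmap (z := z) (renormFrac_denom_pos hq' ht0 ha).ne'
  have hfix : Rmap z t q a = a := isFixedPt_of_tendsto_iterate hlim hderiv.continuousAt
  exact .inr ⟨a, hfix ▸ Rmap_pos hq' ht0 hz ha, hfix, deriv_Rmap_pos hq' ht0 ht1 hz ha,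
    hderiv.deriv ▸ hderiv.le_one_of_tendsto_iterate hmono hlim, hlim⟩
end
end

section
/- Let q ∈ ℕ with q ≥ 2, let t ∈ (0,1) and z > 0. If R_{z,t,q} has a neutral fixed point at some w_N > 0 (i.e., R_{z,t,q}(w_N) = w_N and R'_{z,t,q}(w_N) = 1), then t ∈ (0, t₂(q)] and z = N₊(t,q) or z = N₋(t,q), where N₊ and N₋ are given by N_±(t,q) = [(−27(q−1)²t⁴ + 18(q²−3q+2)t³ + (q²+14q−14)t² + 2(q−2)t + 1) ± √((t−1)((q−1)t+1)(9(q−1)t²−(q−2)t−1)³)] / (8t((q−2)t+1)³). Moreover, for every t ∈ (0, t₂(q)] both values N₊(t,q) and N₋(t,q) are positive. -/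
noncomputable section

/-- `t₂(q) = (q − 2 + √(q² + 32q − 32))/(18(q − 1))`. -/
def tTwo (q : ℝ) : ℝ := (q - 2 + Real.sqrt (q ^ 2 + 32 * q - 32)) / (18 * (q - 1))

/-- `N₊(t,q)`. -/
def Nplus (q t : ℝ) : ℝ :=
  ((-27 * (q - 1) ^ 2 * t ^ 4 + 18 * (q ^ 2 - 3 * q + 2) * t ^ 3
      + (q ^ 2 + 14 * q - 14) * t ^ 2 + 2 * (q - 2) * t + 1)
    + Real.sqrt ((t - 1) * ((q - 1) * t + 1) * (9 * (q - 1) * t ^ 2 - (q - 2) * t - 1) ^ 3))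
    / (8 * t * ((q - 2) * t + 1) ^ 3)

/-- `N₋(t,q)`. -/
def Nminus (q t : ℝ) : ℝ :=
  ((-27 * (q - 1) ^ 2 * t ^ 4 + 18 * (q ^ 2 - 3 * q + 2) * t ^ 3
      + (q ^ 2 + 14 * q - 14) * t ^ 2 + 2 * (q - 2) * t + 1)
    - Real.sqrt ((t - 1) * ((q - 1) * t + 1) * (9 * (q - 1) * t ^ 2 - (q - 2) * t - 1) ^ 3))
    / (8 * t * ((q - 2) * t + 1) ^ 3)


open Real

/-! Write `R(w) = z·φ(w)²` with the Möbius map `φ(w) = (t + a w)/(1 + b w)`, where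
`a = 1 + (q-2)t` and `b = (q-1)t`, and let `c = a - b t = (1-t)(1+(q-1)t)` be its determinant,
so that `φ' = c/D²` with `D = 1 + b w`. With `N = t + a w`, the fixed point and neutrality
equations `z N² = w D²` and `2 c z N = D³` combine to `N D = 2 c w`, i.e.
`a D² - 3 c D + 2 c = 0`. A real root `D` forces the discriminant `c (9c - 8a)` to be
nonnegative, and `8a - 9c = 9(q-1)t² - (q-2)t - 1`, whose positive root is `t₂(q)`.
Eliminating `D` leaves the quadratic `8 t a³ z² - 2 M z + 8 (q-1) t = 0`, where `M` is the
common part of the numerators of `N_±`; its discriminant `M² - 64 (q-1) t² a³` is the radicand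
of `N_±`, so its roots are `N_±`. Both are positive because `M > 0` and
`M² > M² - 64 (q-1) t² a³`. -/

theorem quadratic_nonpos_iff_le_root {A B C t : ℝ} (hA : 0 < A) (hC : 0 ≤ C) (ht : 0 ≤ t) :
    A * t ^ 2 - B * t - C ≤ 0 ↔ t ≤ (B + √(B ^ 2 + 4 * A * C)) / (2 * A) := by
  have hs : √(B ^ 2 + 4 * A * C) ^ 2 = B ^ 2 + 4 * A * C := sq_sqrt (by positivity)
  have hBs : |B| ≤ √(B ^ 2 + 4 * A * C) := abs_le_sqrt (by nlinarith [mul_nonneg hA.le hC])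
  rw [le_div_iff₀ (by positivity)]
  constructor
  · intro h
    by_contra! hlt
    nlinarith [sqrt_nonneg (B ^ 2 + 4 * A * C)]
  · intro h
    have hlow : 0 ≤ t * (2 * A) - B + √(B ^ 2 + 4 * A * C) := by
      nlinarith [le_abs_self B]
    nlinarith [mul_nonneg (sub_nonneg.2 h) hlow]

theorem nonpos_iff_le_tTwo {q t : ℝ} (hq : 1 < q) (ht : 0 ≤ t) :
    9 * (q - 1) * t ^ 2 - (q - 2) * t - 1 ≤ 0 ↔ t ≤ tTwo q := by
  rw [tTwo, show q ^ 2 + 32 * q - 32 = (q - 2) ^ 2 + 4 * (9 * (q - 1)) * 1 by ring,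
    show 18 * (q - 1) = 2 * (9 * (q - 1)) by ring]
  exact quadratic_nonpos_iff_le_root (by linarith) zero_le_one ht

theorem eq_or_eq_of_quadratic_eq_zero {A m C x : ℝ} (hA : A ≠ 0)
    (h : A * x ^ 2 - 2 * m * x + C = 0) :
    x = (m + √(m ^ 2 - A * C)) / A ∨ x = (m - √(m ^ 2 - A * C)) / A := by
  rw [show m ^ 2 - A * C = (A * x - m) ^ 2 by linear_combination (-A) * h, sqrt_sq_eq_abs,
    eq_div_iff hA, eq_div_iff hA]
  rcases abs_cases (A * x - m) with ⟨habs, -⟩ | ⟨habs, -⟩ <;> rw [habs]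
  · left; ring
  · right; ring

section MobiusSquare

variable {z a b t w : ℝ}

theorem hasDerivAt_mobius_sq (hD : 1 + b * w ≠ 0) :
    HasDerivAt (fun w => z * ((t + a * w) / (1 + b * w)) ^ 2)
      (2 * z * (t + a * w) * (a - b * t) / (1 + b * w) ^ 3) w := by
  have hN : HasDerivAt (fun w => t + a * w) a w := by
    simpa using ((hasDerivAt_id w).const_mul a).const_add t
  have hDw : HasDerivAt (fun w => 1 + b * w) b w := by
    simpa using ((hasDerivAt_id w).const_mul b).const_add 1
  refine (((hN.fun_div hDw hD).fun_pow 2).const_mul z).congr_deriv ?_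
  norm_num
  field_simp
  ring

theorem mobius_sq_neutral_fixed_point (hD : 1 + b * w ≠ 0)
    (hfix : z * ((t + a * w) / (1 + b * w)) ^ 2 = w)
    (hder : deriv (fun w => z * ((t + a * w) / (1 + b * w)) ^ 2) w = 1) :
    a * (1 + b * w) ^ 2 - 3 * (a - b * t) * (1 + b * w) + 2 * (a - b * t) = 0 ∧
      2 * (a - b * t) * (t * z) * (a * (1 + b * w) - (a - b * t)) = b * t * (1 + b * w) ^ 3 := by
  rw [div_pow, mul_div_assoc', div_eq_iff (pow_ne_zero 2 hD)] at hfix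
  rw [hasDerivAt_mobius_sq hD |>.deriv, div_eq_iff (pow_ne_zero 3 hD)] at hder
  have hND : (t + a * w) * (1 + b * w) = 2 * (a - b * t) * w := by
    refine mul_left_cancel₀ (pow_ne_zero 2 hD) ?_
    linear_combination 2 * (a - b * t) * hfix - (t + a * w) * hder
  exact ⟨by linear_combination b * hND, by linear_combination b * t * hder⟩

end MobiusSquare

theorem neutral_parameter_quadratic {a c y D : ℝ} (ha : a ≠ 0) (hc : c ≠ 0) (hac : a - c ≠ 0)
    (hQ : a * D ^ 2 - 3 * c * D + 2 * c = 0) (hE : 2 * c * y * (a * D - c) = (a - c) * D ^ 3) :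
    8 * a ^ 3 * y ^ 2 - 2 * (36 * a * c - 8 * a ^ 2 - 27 * c ^ 2) * y + 8 * (a - c) = 0 := by
  -- reducing `D³` modulo `hQ` makes `hE` linear in `D`: `P D = K`
  have hL : 2 * a ^ 2 * y * (a * D - c) = (a - c) * ((9 * c - 2 * a) * D - 6 * c) :=
    mul_left_cancel₀ hc (by linear_combination a ^ 2 * hE + (a - c) * (a * D + 3 * c) * hQ)
  set P := 2 * a ^ 3 * y - (a - c) * (9 * c - 2 * a)
  set K := 2 * a ^ 2 * c * y - 6 * c * (a - c)
  refine mul_left_cancel₀ (mul_ne_zero (mul_ne_zero hc (pow_ne_zero 2 ha)) hac) ?_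
  linear_combination P ^ 2 * hQ - (a * (P * D + K) - 3 * c * P) * hL

def neutralNumerator (q t : ℝ) : ℝ :=
  -27 * (q - 1) ^ 2 * t ^ 4 + 18 * (q ^ 2 - 3 * q + 2) * t ^ 3
    + (q ^ 2 + 14 * q - 14) * t ^ 2 + 2 * (q - 2) * t + 1

def neutralDiscriminant (q t : ℝ) : ℝ :=
  (t - 1) * ((q - 1) * t + 1) * (9 * (q - 1) * t ^ 2 - (q - 2) * t - 1) ^ 3

theorem Nplus_eq (q t : ℝ) :
    Nplus q t =
      (neutralNumerator q t + √(neutralDiscriminant q t)) / (8 * t * ((q - 2) * t + 1) ^ 3) :=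
  rfl

theorem Nminus_eq (q t : ℝ) :
    Nminus q t =
      (neutralNumerator q t - √(neutralDiscriminant q t)) / (8 * t * ((q - 2) * t + 1) ^ 3) :=
  rfl

theorem neutralNumerator_sq_sub (q t : ℝ) :
    neutralNumerator q t ^ 2 - 8 * t * ((q - 2) * t + 1) ^ 3 * (8 * (q - 1) * t) =
      neutralDiscriminant q t := by
  unfold neutralNumerator neutralDiscriminant
  ring

theorem Rmap_eq_mobius_sq (z t q : ℝ) :
    Rmap z t q = fun w => z * ((t + (1 + (q - 2) * t) * w) / (1 + (q - 1) * t * w)) ^ 2 := by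
  funext w
  unfold Rmap
  ring

theorem Rmap_neutral_fixed_point {q t z w : ℝ} (hq : 1 < q) (ht : 0 < t) (ht1 : t < 1)
    (hw : 0 < w) (hfix : Rmap z t q w = w) (hder : deriv (Rmap z t q) w = 1) :
    9 * (q - 1) * t ^ 2 - (q - 2) * t - 1 ≤ 0 ∧
      8 * t * ((q - 2) * t + 1) ^ 3 * z ^ 2 - 2 * neutralNumerator q t * z + 8 * (q - 1) * t
        = 0 := by
  have hq1 : 0 < q - 1 := sub_pos.2 hq
  have hD : 1 + (q - 1) * t * w ≠ 0 := by positivity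
  rw [Rmap_eq_mobius_sq] at hfix hder
  obtain ⟨hQ, hE⟩ := mobius_sq_neutral_fixed_point hD hfix hder
  have ha : 0 < 1 + (q - 2) * t := by nlinarith [mul_pos hq1 ht]
  have hc : 0 < 1 + (q - 2) * t - (q - 1) * t * t := by
    nlinarith [mul_pos (sub_pos.2 ht1) (by positivity : 0 < 1 + (q - 1) * t)]
  constructor
  · have hdisc : (2 * (1 + (q - 2) * t) * (1 + (q - 1) * t * w)
        - 3 * (1 + (q - 2) * t - (q - 1) * t * t)) ^ 2 = (1 + (q - 2) * t - (q - 1) * t * t) *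
          (9 * (1 + (q - 2) * t - (q - 1) * t * t) - 8 * (1 + (q - 2) * t)) := by
      linear_combination 4 * (1 + (q - 2) * t) * hQ
    linarith [nonneg_of_mul_nonneg_right (hdisc ▸ sq_nonneg _) hc]
  · have hac : 1 + (q - 2) * t - (1 + (q - 2) * t - (q - 1) * t * t) ≠ 0 := by
      rw [sub_sub_cancel]
      positivity
    have hy := neutral_parameter_quadratic (y := t * z) ha.ne' hc.ne' hac hQ
      (by linear_combination hE)
    refine mul_left_cancel₀ ht.ne' ?_
    unfold neutralNumerator
    linear_combination hy

theorem neutralNumerator_pos {q t : ℝ} (hq : 1 < q) (ht : 0 < t)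
    (hg : 9 * (q - 1) * t ^ 2 - (q - 2) * t - 1 ≤ 0) : 0 < neutralNumerator q t := by
  have hβ : 0 < (q - 1) * t ^ 2 := by have := sub_pos.2 hq; positivity
  -- with `a = 1 + (q-2)t` and `β = (q-1)t² ≤ a/9`, `M = a² + 18aβ - 27β² ≥ a² + 15aβ`
  have hM : neutralNumerator q t =
      (1 + (q - 2) * t) ^ 2 + 18 * (1 + (q - 2) * t) * ((q - 1) * t ^ 2)
        - 27 * ((q - 1) * t ^ 2) ^ 2 := by
    unfold neutralNumerator
    ring
  rw [hM]
  nlinarith [mul_nonneg hβ.le (by linarith : 0 ≤ 1 + (q - 2) * t - 9 * ((q - 1) * t ^ 2))]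

theorem Nplus_pos_and_Nminus_pos {q t : ℝ} (hq : 1 < q) (ht : 0 < t)
    (hg : 9 * (q - 1) * t ^ 2 - (q - 2) * t - 1 ≤ 0) : 0 < Nplus q t ∧ 0 < Nminus q t := by
  have hq1 : 0 < q - 1 := sub_pos.2 hq
  have hM := neutralNumerator_pos hq ht hg
  have ha : 0 < (q - 2) * t + 1 := by nlinarith [mul_pos hq1 (mul_pos ht ht)]
  have hsqrt : √(neutralDiscriminant q t) < neutralNumerator q t := by
    rw [sqrt_lt' hM, ← neutralNumerator_sq_sub]
    have : 0 < 8 * t * ((q - 2) * t + 1) ^ 3 * (8 * (q - 1) * t) := by positivity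
    linarith
  rw [Nplus_eq, Nminus_eq]
  exact ⟨by have := sqrt_nonneg (neutralDiscriminant q t); positivity,
    div_pos (by linarith) (by positivity)⟩

theorem eq_Nplus_or_eq_Nminus {q t z : ℝ} (hA : 8 * t * ((q - 2) * t + 1) ^ 3 ≠ 0)
    (hz : 8 * t * ((q - 2) * t + 1) ^ 3 * z ^ 2 - 2 * neutralNumerator q t * z + 8 * (q - 1) * t
      = 0) :
    z = Nplus q t ∨ z = Nminus q t := by
  have := eq_or_eq_of_quadratic_eq_zero hA hz
  rwa [neutralNumerator_sq_sub] at this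

/-- **Lemma (neutral fixed points in the ferromagnetic regime).**
For `q ≥ 2` a natural number: if `t ∈ (0,1)`, `z > 0`, and `R_{z,t,q}` has a
neutral fixed point `w_N > 0` (i.e. `R_{z,t,q}(w_N) = w_N` and `R'_{z,t,q}(w_N) = 1`),
then `t ∈ (0, t₂(q)]` and `z = N₊(t,q)` or `z = N₋(t,q)`.  Moreover, for every
`t ∈ (0, t₂(q)]` both values `N₊(t,q)` and `N₋(t,q)` are positive. -/
theorem neutral_fixed_point_classification (q : ℕ) (hq : 2 ≤ q) :
    (∀ t z : ℝ, 0 < t → t < 1 → 0 < z →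
      (∃ wN : ℝ, 0 < wN ∧ Rmap z t q wN = wN ∧ deriv (Rmap z t q) wN = 1) →
      (0 < t ∧ t ≤ tTwo q) ∧ (z = Nplus q t ∨ z = Nminus q t)) ∧
    (∀ t : ℝ, 0 < t → t ≤ tTwo q → 0 < Nplus q t ∧ 0 < Nminus q t) := by
  have hq1 : (1 : ℝ) < q := by exact_mod_cast hq
  refine ⟨fun t z ht ht1 _ ⟨w, hw, hfix, hder⟩ => ?_, fun t ht ht2 => ?_⟩
  · obtain ⟨hg, hz⟩ := Rmap_neutral_fixed_point hq1 ht ht1 hw hfix hder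
    have ha : 0 < (q - 2) * t + 1 := by nlinarith
    exact ⟨⟨ht, (nonpos_iff_le_tTwo hq1 ht.le).1 hg⟩,
      eq_Nplus_or_eq_Nminus (by positivity) hz⟩
  · exact Nplus_pos_and_Nminus_pos hq1 ht ((nonpos_iff_le_tTwo hq1 ht.le).2 ht2)
end
end

section
/- Let q ∈ ℕ with q ≥ 2, let t > 1 and z > 0, and consider the second iterate R²_{z,t,q}(w) = R_{z,t,q}(R_{z,t,q}(w)) as a function of w ∈ [0,∞). Then: (i) R²_{z,t,q} is strictly increasing on [0,∞); (ii) R²_{z,t,q} has at least one fixed point in [0,∞); and (iii) R²_{z,t,q}([0,∞)) ⊆ [c,d] where c = R²_{z,t,q}(0) > 0 and d = lim_{w→∞} R²_{z,t,q}(w) is finite and positive, with c < d. -/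
/-!
`R_{z,t,q}` is `w ↦ z·g(w)²` for the Möbius map `g(w) = (t + (1 + (q-2)t) w) / (1 + (q-1)t w)`,
whose determinant `1 + (q-2)t - (q-1)t² = (1-t)(1 + (q-1)t)` is negative for `t > 1`. So `g` is a
decreasing hyperbola on `[0,∞)` above its positive asymptote `m₀ = (1 + (q-2)t)/((q-1)t)`, and `R`
is strictly decreasing, continuous, larger than `m = z m₀²` and tends to `m`. Any such map has a
strictly increasing second iterate with values in `[R(R 0), R m)` tending to `R m`, and `[0, R m]`
contains a fixed point of `R ∘ R` by the intermediate value theorem.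
-/

noncomputable section

/-- The second iterate `R²_{z,t,q}(w) = R_{z,t,q}(R_{z,t,q}(w))`. -/
def Rmap2 (z t q : ℝ) (w : ℝ) : ℝ := Rmap z t q (Rmap z t q w)

open Set Filter Topology Function

def mobius (a b c w : ℝ) : ℝ := (a + b * w) / (1 + c * w)

section Mobius

variable {a b c : ℝ}

theorem mobius_eq_add_div {w : ℝ} (hc : c ≠ 0) (hw : 1 + c * w ≠ 0) :
    mobius a b c w = b / c + (a * c - b) / c / (1 + c * w) := by
  unfold mobius
  rw [div_div, div_add_div _ _ hc (mul_ne_zero hc hw),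
    div_eq_div_iff hw (mul_ne_zero hc (mul_ne_zero hc hw))]
  ring

theorem strictAntiOn_mobius (hc : 0 < c) (hdet : b < a * c) :
    StrictAntiOn (mobius a b c) (Ici 0) := by
  intro x hx y hy hxy
  have hcx : 0 < 1 + c * x := by nlinarith [mem_Ici.1 hx]
  have hcy : 0 < 1 + c * y := by nlinarith [mem_Ici.1 hy]
  rw [mobius_eq_add_div hc.ne' hcx.ne', mobius_eq_add_div hc.ne' hcy.ne', add_lt_add_iff_left]
  exact div_lt_div_of_pos_left (div_pos (by linarith) hc) hcx (by nlinarith)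

theorem div_lt_mobius {w : ℝ} (hc : 0 < c) (hdet : b < a * c) (hw : 0 ≤ w) :
    b / c < mobius a b c w := by
  have hcw : 0 < 1 + c * w := by nlinarith
  rw [mobius_eq_add_div hc.ne' hcw.ne', lt_add_iff_pos_right]
  exact div_pos (div_pos (by linarith) hc) hcw

theorem tendsto_mobius_atTop (hc : 0 < c) :
    Tendsto (mobius a b c) atTop (𝓝 (b / c)) := by
  have hden : Tendsto (fun w => 1 + c * w) atTop atTop :=
    tendsto_atTop_add_const_left _ _ (tendsto_id.const_mul_atTop hc)
  have hlim : Tendsto (fun w => b / c + (a * c - b) / c / (1 + c * w)) atTop (𝓝 (b / c)) := by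
    simpa using tendsto_const_nhds.add (tendsto_const_nhds.div_atTop hden)
  refine hlim.congr' ?_
  filter_upwards [eventually_ge_atTop 0] with w hw
  exact (mobius_eq_add_div hc.ne' (by nlinarith)).symm

theorem continuousOn_mobius (hc : 0 ≤ c) : ContinuousOn (mobius a b c) (Ici 0) :=
  ContinuousOn.div (by fun_prop) (by fun_prop) fun w hw => by nlinarith [mem_Ici.1 hw]

end Mobius

section SecondIterate

variable {R : ℝ → ℝ} {m : ℝ}

theorem mapsTo_Ici_zero_of_lt (hm : 0 ≤ m) (hlow : ∀ w ∈ Ici (0 : ℝ), m < R w) :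
    MapsTo R (Ici 0) (Ici 0) :=
  fun w hw => mem_Ici.2 (hm.trans (hlow w hw).le)

theorem comp_self_lt_apply_of_lt (hR : StrictAntiOn R (Ici 0)) (hm : 0 ≤ m)
    (hlow : ∀ w ∈ Ici (0 : ℝ), m < R w) {w : ℝ} (hw : 0 ≤ w) : R (R w) < R m :=
  hR hm (mapsTo_Ici_zero_of_lt hm hlow hw) (hlow w hw)

theorem tendsto_comp_self_atTop (hcont : ContinuousOn R (Ici 0)) (hm : 0 ≤ m)
    (hlow : ∀ w ∈ Ici (0 : ℝ), m < R w) (hlim : Tendsto R atTop (𝓝 m)) :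
    Tendsto (R ∘ R) atTop (𝓝 (R m)) := by
  have hwithin : Tendsto R atTop (𝓝[Ici 0] m) :=
    tendsto_nhdsWithin_iff.2 ⟨hlim, (eventually_ge_atTop 0).mono
      fun w hw => mapsTo_Ici_zero_of_lt hm hlow (mem_Ici.2 hw)⟩
  exact (hcont m hm).tendsto.comp hwithin

theorem exists_isFixedPt_comp_self (hR : StrictAntiOn R (Ici 0)) (hcont : ContinuousOn R (Ici 0))
    (hm : 0 ≤ m) (hlow : ∀ w ∈ Ici (0 : ℝ), m < R w) :
    ∃ w ∈ Ici (0 : ℝ), IsFixedPt (R ∘ R) w := by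
  have hmaps := mapsTo_Ici_zero_of_lt hm hlow
  have hRm : 0 ≤ R m := hmaps hm
  have hcont2 : ContinuousOn (R ∘ R) (Icc 0 (R m)) :=
    (hcont.comp hcont hmaps).mono Icc_subset_Ici_self
  obtain ⟨w, hw, hfix⟩ := exists_mem_Icc_isFixedPt hcont2 hRm (hmaps (hmaps self_mem_Ici))
    (comp_self_lt_apply_of_lt hR hm hlow hRm).le
  exact ⟨w, hw.1, hfix⟩

end SecondIterate

def RmapLim (z t q : ℝ) : ℝ := z * ((1 + (q - 2) * t) / ((q - 1) * t)) ^ 2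

section Rmap

variable {z t q : ℝ}

theorem Rmap_eq_mobius (w : ℝ) :
    Rmap z t q w = z * mobius t (1 + (q - 2) * t) ((q - 1) * t) w ^ 2 := by
  unfold Rmap mobius
  ring

theorem Rmap_mobius_det_neg (hq : 1 ≤ q) (ht : 1 < t) : 1 + (q - 2) * t < t * ((q - 1) * t) := by
  have h : 0 < 1 + (q - 1) * t := by nlinarith
  nlinarith [mul_pos (sub_pos.2 ht) h]

theorem RmapLim_nonneg (hz : 0 ≤ z) : 0 ≤ RmapLim z t q := by
  unfold RmapLim
  positivity

theorem Rmap_asymptote_nonneg (hq : 2 ≤ q) (ht : 0 ≤ t) :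
    0 ≤ (1 + (q - 2) * t) / ((q - 1) * t) :=
  div_nonneg (by nlinarith) (by nlinarith)

theorem Rmap_asymptote_lt_mobius (hq : 2 ≤ q) (ht : 1 < t) {w : ℝ} (hw : 0 ≤ w) :
    (1 + (q - 2) * t) / ((q - 1) * t) < mobius t (1 + (q - 2) * t) ((q - 1) * t) w :=
  div_lt_mobius (by nlinarith) (Rmap_mobius_det_neg (by linarith) ht) hw

theorem RmapLim_lt_Rmap (hz : 0 < z) (hq : 2 ≤ q) (ht : 1 < t) :
    ∀ w ∈ Ici (0 : ℝ), RmapLim z t q < Rmap z t q w := by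
  intro w hw
  have hm₀ := Rmap_asymptote_nonneg hq (zero_le_one.trans ht.le)
  rw [Rmap_eq_mobius, RmapLim]
  gcongr
  exact Rmap_asymptote_lt_mobius hq ht hw

theorem Rmap_strictAntiOn (hz : 0 < z) (hq : 2 ≤ q) (ht : 1 < t) :
    StrictAntiOn (Rmap z t q) (Ici 0) := by
  intro x hx y hy hxy
  have hy_nonneg := (Rmap_asymptote_nonneg hq (zero_le_one.trans ht.le)).trans
    (Rmap_asymptote_lt_mobius hq ht (mem_Ici.1 hy)).le
  rw [Rmap_eq_mobius, Rmap_eq_mobius]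
  gcongr
  exact strictAntiOn_mobius (by nlinarith) (Rmap_mobius_det_neg (by linarith) ht) hx hy hxy

theorem continuousOn_Rmap (hq : 1 ≤ q) (ht : 0 ≤ t) : ContinuousOn (Rmap z t q) (Ici 0) := by
  simp_rw [funext (Rmap_eq_mobius (z := z) (t := t) (q := q))]
  exact continuousOn_const.mul ((continuousOn_mobius (by nlinarith)).pow 2)

theorem tendsto_Rmap_atTop (hq : 1 < q) (ht : 0 < t) :
    Tendsto (Rmap z t q) atTop (𝓝 (RmapLim z t q)) := by
  simp_rw [funext (Rmap_eq_mobius (z := z) (t := t) (q := q))]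
  exact ((tendsto_mobius_atTop (by nlinarith)).pow 2).const_mul z

end Rmap

/-- **Lemma (properties of the second iterate, antiferromagnetic case).**
For `q ≥ 2` a natural number, `t > 1`, and `z > 0`:
(i) `R²_{z,t,q}` is strictly increasing on `[0,∞)`;
(ii) `R²_{z,t,q}` has a fixed point in `[0,∞)`;
(iii) `R²_{z,t,q}([0,∞)) ⊆ [c,d]` where `c = R²_{z,t,q}(0) > 0` and
`d = lim_{w→∞} R²_{z,t,q}(w)` is finite and positive, with `c < d`. -/
theorem renorm_second_iterate_properties
    (q : ℕ) (hq : 2 ≤ q) (t : ℝ) (ht : 1 < t) (z : ℝ) (hz : 0 < z) :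
    StrictMonoOn (Rmap2 z t q) (Set.Ici 0) ∧
    (∃ w ∈ Set.Ici (0 : ℝ), Rmap2 z t q w = w) ∧
    (∃ d : ℝ, Filter.Tendsto (Rmap2 z t q) Filter.atTop (nhds d) ∧
      0 < Rmap2 z t q 0 ∧ Rmap2 z t q 0 < d ∧
      ∀ w ∈ Set.Ici (0 : ℝ), Rmap2 z t q w ∈ Set.Icc (Rmap2 z t q 0) d) := by
  have hq' : (2 : ℝ) ≤ q := by exact_mod_cast hq
  have hanti := Rmap_strictAntiOn hz hq' ht
  have ht₀ : 0 < t := zero_lt_one.trans ht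
  have hcont := continuousOn_Rmap (z := z) (by linarith : (1 : ℝ) ≤ q) ht₀.le
  have hm := RmapLim_nonneg (t := t) (q := q) hz.le
  have hlow := RmapLim_lt_Rmap hz hq' ht
  have hmaps := mapsTo_Ici_zero_of_lt hm hlow
  have hmono : StrictMonoOn (Rmap2 z t q) (Ici 0) := hanti.comp hanti hmaps
  have hupper := fun w (hw : w ∈ Ici (0 : ℝ)) => comp_self_lt_apply_of_lt hanti hm hlow hw
  refine ⟨hmono, exists_isFixedPt_comp_self hanti hcont hm hlow, _,
    tendsto_comp_self_atTop hcont hm hlow (tendsto_Rmap_atTop (by linarith) ht₀),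
    hm.trans_lt (hlow _ (hmaps self_mem_Ici)), hupper 0 self_mem_Ici,
    fun w hw => ⟨hmono.monotoneOn self_mem_Ici hw (mem_Ici.1 hw), (hupper w hw).le⟩⟩
end
end

section
/- Let q be a real number with q ≥ 2 and let t ∈ (0, t₂(q)]. Then: (a) when z = N₊(t,q), the point w = z is a fixed point of R_{z,t,q} if and only if t = (1 − 2√(q−1))/(5 − 4q); and (b) when z = N₋(t,q), the point w = z is a fixed point of R_{z,t,q} if and only if t = 1/(q+1). -/
noncomputable section

def Pa (q t : ℝ) : ℝ :=
  -27 * (q - 1) ^ 2 * t ^ 4 + 18 * (q ^ 2 - 3 * q + 2) * t ^ 3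
      + (q ^ 2 + 14 * q - 14) * t ^ 2 + 2 * (q - 2) * t + 1

def Da (q t : ℝ) : ℝ :=
  (t - 1) * ((q - 1) * t + 1) * (9 * (q - 1) * t ^ 2 - (q - 2) * t - 1) ^ 3

def dena (q t : ℝ) : ℝ := 8 * t * ((q - 2) * t + 1) ^ 3

-- quadratic bound from t ≤ t₂
lemma aux_quad (q t : ℝ) (hq : 2 ≤ q) (ht0 : 0 < t) (ht2 : t ≤ tTwo q) :
    9 * (q - 1) * t ^ 2 - (q - 2) * t - 1 ≤ 0 := by
  have hq1 : (1:ℝ) ≤ q - 1 := by linarith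
  set s := Real.sqrt (q ^ 2 + 32 * q - 32) with hs
  have hs2 : s ^ 2 = q ^ 2 + 32 * q - 32 := Real.sq_sqrt (by nlinarith)
  have hs0 : 0 ≤ s := Real.sqrt_nonneg _
  rw [tTwo, le_div_iff₀ (by linarith : (0:ℝ) < 18 * (q - 1))] at ht2
  have hXle : 18 * (q - 1) * t - (q - 2) ≤ s := by linarith
  have hsge : q - 2 ≤ s := by nlinarith [sq_nonneg (s - (q - 2)), sq_nonneg (s + (q - 2))]
  have h18 : 0 ≤ 18 * (q - 1) * t := by positivity
  have h1 : 0 ≤ s - (18 * (q - 1) * t - (q - 2)) := by linarith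
  have h2 : 0 ≤ s + (18 * (q - 1) * t - (q - 2)) := by linarith
  nlinarith [mul_nonneg h1 h2, hs2, hq1, ht0]

lemma fixed_iff (q t z : ℝ) (hq : 2 ≤ q) (ht0 : 0 < t) (ht1 : t < 1) (hz : 0 < z) :
    Rmap z t q z = z ↔ z = 1 := by
  have hB : 0 < 1 + (q - 1) * t * z := by
    have := mul_nonneg (mul_nonneg (by linarith : (0:ℝ) ≤ q - 1) ht0.le) hz.le
    linarith
  constructor
  · intro h
    rw [Rmap, div_pow, ← mul_div_assoc, div_eq_iff (by positivity)] at h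
    have h3 : (t + z + (q - 2) * t * z) ^ 2 = (1 + (q - 1) * t * z) ^ 2 :=
      mul_left_cancel₀ (ne_of_gt hz) h
    have h4 : ((t - 1) * (1 - z)) * ((1 + t) + z * (1 + (2 * q - 3) * t)) = 0 := by
      linear_combination h3
    rcases mul_eq_zero.1 h4 with h5 | h5
    · rcases mul_eq_zero.1 h5 with h6 | h6
      · exfalso; linarith
      · linarith
    · exfalso
      have h7 : 0 < (2 * q - 3) * t := mul_pos (by linarith) ht0
      have h8 : 0 ≤ z * (1 + (2 * q - 3) * t) := mul_nonneg hz.le (by linarith)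
      linarith
  · intro h
    subst h
    have hBne : 1 + (q - 1) * t * 1 ≠ 0 := by
      have := mul_nonneg (by linarith : (0:ℝ) ≤ q - 1) ht0.le
      intro hc; rw [mul_one] at hc; linarith
    rw [Rmap, show t + 1 + (q - 2) * t * 1 = 1 + (q - 1) * t * 1 from by ring,
      div_self hBne]
    norm_num

lemma Eval_r (q t r : ℝ) (h2r : (2 : ℝ) * r + 1 ≠ 0)
    (hqval : q = r ^ 2 + 1) (htval : t = 1 / (2 * r + 1)) :
    dena q t - Pa q t = 4 * r ^ 2 * (r - 1) ^ 3 * (r + 1) / (2 * r + 1) ^ 4 := by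
  subst hqval htval
  rw [dena, Pa]
  field_simp
  ring

lemma Eval_q (q t : ℝ) (hq1ne : q + 1 ≠ 0) (htval : t = 1 / (q + 1)) :
    dena q t - Pa q t = -(4 * q * (q - 2) ^ 3) / (q + 1) ^ 4 := by
  subst htval
  rw [dena, Pa]
  field_simp
  ring

lemma Ekey (q t : ℝ) : (dena q t - Pa q t) ^ 2 - Da q t
    = 16 * t * ((q + 1) * t - 1) ^ 2 * ((q - 2) * t + 1) ^ 3
      * ((4 * q - 5) * t ^ 2 + 2 * t - 1) := by
  rw [Pa, Da, dena]; ring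

lemma PDkey (q t : ℝ) :
    Pa q t ^ 2 - Da q t = 64 * (q - 1) * t ^ 2 * ((q - 2) * t + 1) ^ 3 := by
  rw [Pa, Da]; ring


set_option maxHeartbeats 1000000 in
/-- **Lemma (when the marked point `z = N_±(t,q)` is fixed).**
Let `q ≥ 2` be real and `t ∈ (0, t₂(q)]`.  Then:
(a) for `z = N₊(t,q)`, the point `w = z` is fixed by `R_{z,t,q}` if and only if
`t = (1 − 2√(q−1))/(5 − 4q)`; and
(b) for `z = N₋(t,q)`, the point `w = z` is fixed by `R_{z,t,q}` if and only if
`t = 1/(q+1)`. -/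
theorem marked_point_Npm_fixed_iff
    (q : ℝ) (hq : 2 ≤ q) (t : ℝ) (ht0 : 0 < t) (ht2 : t ≤ tTwo q) :
    (Rmap (Nplus q t) t q (Nplus q t) = Nplus q t ↔
      t = (1 - 2 * Real.sqrt (q - 1)) / (5 - 4 * q)) ∧
    (Rmap (Nminus q t) t q (Nminus q t) = Nminus q t ↔ t = 1 / (q + 1)) := by
  have hq1 : (1:ℝ) ≤ q - 1 := by linarith
  have hm : 9 * (q - 1) * t ^ 2 - (q - 2) * t - 1 ≤ 0 := aux_quad q t hq ht0 ht2
  have ht1 : t < 1 := by nlinarith [hm, mul_pos ht0 ht0, sq_nonneg (t - 1)]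
  have hC : 0 < (q - 2) * t + 1 := by
    nlinarith [mul_nonneg (by linarith : (0:ℝ) ≤ q - 2) ht0.le]
  have hden : 0 < dena q t := by
    have := pow_pos hC 3
    rw [dena]; positivity
  have hcube : (9 * (q - 1) * t ^ 2 - (q - 2) * t - 1) ^ 3 ≤ 0 := by
    nlinarith [hm, sq_nonneg (9 * (q - 1) * t ^ 2 - (q - 2) * t - 1)]
  have hD0 : 0 ≤ Da q t := by
    have h1t : (0:ℝ) ≤ 1 - t := by linarith
    have hqt : (0:ℝ) ≤ (q - 1) * t + 1 := by
      nlinarith [mul_nonneg (by linarith : (0:ℝ) ≤ q - 1) ht0.le]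
    have hkey := mul_nonneg (mul_nonneg h1t hqt)
      (by linarith : (0:ℝ) ≤ -((9 * (q - 1) * t ^ 2 - (q - 2) * t - 1) ^ 3))
    rw [Da]; nlinarith [hkey]
  have hsq : Real.sqrt (Da q t) ^ 2 = Da q t := Real.sq_sqrt hD0
  have hs0 : 0 ≤ Real.sqrt (Da q t) := Real.sqrt_nonneg _
  have hP : 0 < Pa q t := by
    have hu0 : 0 ≤ 9 * (q - 1) * t ^ 2 := by positivity
    have ha0 : 0 ≤ (q - 2) * t := mul_nonneg (by linarith) ht0.le
    have hq14 : (0:ℝ) ≤ q ^ 2 + 14 * q - 14 := by nlinarith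
    rw [Pa]
    nlinarith [mul_nonneg hu0 (by linarith : 0 ≤ (q - 2) * t + 1 - 9 * (q - 1) * t ^ 2),
      mul_nonneg hu0 ha0, mul_nonneg hq14 (sq_nonneg t), ha0]
  have hsltP : Real.sqrt (Da q t) < Pa q t := by
    nlinarith [hsq, hs0, hP, PDkey q t,
      mul_pos (mul_pos (by nlinarith : (0:ℝ) < 64 * (q - 1)) (by positivity : (0:ℝ) < t ^ 2))
        (pow_pos hC 3)]
  have hNp : Nplus q t = (Pa q t + Real.sqrt (Da q t)) / dena q t := rfl
  have hNm : Nminus q t = (Pa q t - Real.sqrt (Da q t)) / dena q t := rfl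
  have hNp_pos : 0 < Nplus q t := by
    rw [hNp]; exact div_pos (by linarith) hden
  have hNm_pos : 0 < Nminus q t := by
    rw [hNm]; exact div_pos (by linarith) hden
  have hq1ne : q + 1 ≠ 0 := by linarith
  have h54ne : (5 : ℝ) - 4 * q ≠ 0 := by linarith
  have h16pos : (0:ℝ) < 16 * t * ((q - 2) * t + 1) ^ 3 := by
    have := pow_pos hC 3; positivity
  set r := Real.sqrt (q - 1) with hrdef
  have hr0 : 0 ≤ r := Real.sqrt_nonneg _
  have hr2 : r ^ 2 = q - 1 := Real.sq_sqrt (by linarith)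
  have hr1 : 1 ≤ r := by
    have h := Real.sqrt_le_sqrt (show (1:ℝ) ≤ q - 1 from hq1)
    rwa [Real.sqrt_one] at h
  have h2rne : (2 : ℝ) * r + 1 ≠ 0 := by linarith
  have hqval : q = r ^ 2 + 1 := by linarith
  have quad_root : ((4 * q - 5) * t ^ 2 + 2 * t - 1 = 0) → t * (2 * r + 1) = 1 := by
    intro hQ
    have hX2 : ((4 * q - 5) * t + 1) ^ 2 = 4 * (q - 1) := by
      linear_combination (4 * q - 5) * hQ
    have hXpos : 0 < (4 * q - 5) * t + 1 := by
      nlinarith [mul_pos (by linarith : (0:ℝ) < 4 * q - 5) ht0]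
    have hfac : ((4 * q - 5) * t + 1 - 2 * r) * ((4 * q - 5) * t + 1 + 2 * r) = 0 := by
      linear_combination hX2 - 4 * hr2
    have hX : (4 * q - 5) * t + 1 = 2 * r := by
      rcases mul_eq_zero.1 hfac with h | h
      · linarith
      · exfalso; linarith
    have h0 : (2 * r - 1) * (t * (2 * r + 1) - 1) = 0 := by
      linear_combination hX + 4 * t * hr2
    rcases mul_eq_zero.1 h0 with h | h
    · exfalso; linarith
    · linarith
  constructor
  · -- part (a)
    rw [fixed_iff q t (Nplus q t) hq ht0 ht1 hNp_pos]
    constructor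
    · intro h
      rw [hNp, div_eq_one_iff_eq (ne_of_gt hden)] at h
      have hE : Real.sqrt (Da q t) = dena q t - Pa q t := by linarith
      have hE0 : 0 ≤ dena q t - Pa q t := by rw [← hE]; exact hs0
      have hED : (dena q t - Pa q t) ^ 2 = Da q t := by rw [← hE]; exact hsq
      have hz0 : 16 * t * ((q - 2) * t + 1) ^ 3
          * (((q + 1) * t - 1) ^ 2 * ((4 * q - 5) * t ^ 2 + 2 * t - 1)) = 0 := by
        linear_combination hED - Ekey q t
      rcases mul_eq_zero.1 hz0 with h1 | h1
      · exact absurd h1 (ne_of_gt h16pos)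
      rcases mul_eq_zero.1 h1 with h2 | h2
      · have h2' : (q + 1) * t - 1 = 0 := by
          exact pow_eq_zero_iff (by norm_num : 2 ≠ 0) |>.1 h2
        have hEv := Eval_q q t hq1ne (by rw [eq_div_iff hq1ne]; linarith)
        have hnum : 0 ≤ -(4 * q * (q - 2) ^ 3) := by
          have h4 : (0:ℝ) < (q + 1) ^ 4 := by positivity
          rw [hEv, le_div_iff₀ h4] at hE0
          linarith [hE0]
        have hq2 : q = 2 := by
          by_contra hne
          have hgt : 2 < q := lt_of_le_of_ne hq (Ne.symm hne)
          nlinarith [pow_pos (by linarith : (0:ℝ) < q - 2) 3]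
        have ht13 : t = 1 / 3 := by
          rw [eq_div_iff (by norm_num : (3:ℝ) ≠ 0)]
          rw [hq2] at h2'; linarith
        rw [ht13, hrdef, hq2]
        norm_num [Real.sqrt_one]
      · have hu := quad_root h2
        rw [eq_div_iff h54ne]
        have hX : (4 * q - 5) * t + 1 = 2 * r := by
          linear_combination (2 * r - 1) * hu - 4 * t * hr2
        linear_combination -hX
    · intro h
      rw [eq_div_iff h54ne] at h
      have h2r1 : (1 : ℝ) - 2 * r ≠ 0 := by intro hc; nlinarith
      have h0 : (1 - 2 * r) * (t * (2 * r + 1) - 1) = 0 := by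
        linear_combination h - 4 * t * hr2
      have hu : t * (2 * r + 1) = 1 := by
        rcases mul_eq_zero.1 h0 with hh | hh
        · exact absurd hh h2r1
        · linarith
      have hQ : (4 * q - 5) * t ^ 2 + 2 * t - 1 = 0 := by
        linear_combination ((2 * r - 1) * t + 1) * hu - 4 * t ^ 2 * hr2
      have hED : (dena q t - Pa q t) ^ 2 = Da q t := by
        linear_combination Ekey q t
          + 16 * t * ((q + 1) * t - 1) ^ 2 * ((q - 2) * t + 1) ^ 3 * hQ
      have hEv := Eval_r q t r h2rne hqval (by rw [eq_div_iff h2rne]; linarith)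
      have hE0 : 0 ≤ dena q t - Pa q t := by
        rw [hEv]
        apply div_nonneg _ (by positivity)
        have h3 : (0:ℝ) ≤ (r - 1) ^ 3 := pow_nonneg (by linarith) 3
        have h4 : (0:ℝ) ≤ 4 * r ^ 2 := by positivity
        nlinarith [mul_nonneg (mul_nonneg h4 h3) (by linarith : (0:ℝ) ≤ r + 1)]
      have hsD : Real.sqrt (Da q t) = dena q t - Pa q t := by
        rw [← hED, Real.sqrt_sq hE0]
      rw [hNp, hsD, div_eq_one_iff_eq (ne_of_gt hden)]
      ring
  · -- part (b)
    rw [fixed_iff q t (Nminus q t) hq ht0 ht1 hNm_pos]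
    constructor
    · intro h
      rw [hNm, div_eq_one_iff_eq (ne_of_gt hden)] at h
      have hE : Real.sqrt (Da q t) = -(dena q t - Pa q t) := by linarith
      have hE0 : dena q t - Pa q t ≤ 0 := by
        have := hs0; rw [hE] at this; linarith
      have hED : (dena q t - Pa q t) ^ 2 = Da q t := by
        linear_combination (dena q t - Pa q t - Real.sqrt (Da q t)) * hE + hsq
      have hz0 : 16 * t * ((q - 2) * t + 1) ^ 3
          * (((q + 1) * t - 1) ^ 2 * ((4 * q - 5) * t ^ 2 + 2 * t - 1)) = 0 := by
        linear_combination hED - Ekey q t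
      rcases mul_eq_zero.1 hz0 with h1 | h1
      · exact absurd h1 (ne_of_gt h16pos)
      rcases mul_eq_zero.1 h1 with h2 | h2
      · have h2' : (q + 1) * t - 1 = 0 := by
          exact pow_eq_zero_iff (by norm_num : 2 ≠ 0) |>.1 h2
        rw [eq_div_iff hq1ne]; linarith
      · have hu := quad_root h2
        have hEv := Eval_r q t r h2rne hqval (by rw [eq_div_iff h2rne]; linarith)
        have hE0' : 0 ≤ dena q t - Pa q t := by
          rw [hEv]
          apply div_nonneg _ (by positivity)
          have h3 : (0:ℝ) ≤ (r - 1) ^ 3 := pow_nonneg (by linarith) 3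
          have h4 : (0:ℝ) ≤ 4 * r ^ 2 := by positivity
          nlinarith [mul_nonneg (mul_nonneg h4 h3) (by linarith : (0:ℝ) ≤ r + 1)]
        have heq0 : dena q t - Pa q t = 0 := le_antisymm hE0 hE0'
        have hnum : 4 * r ^ 2 * (r - 1) ^ 3 * (r + 1) = 0 := by
          rw [heq0] at hEv
          rcases div_eq_zero_iff.1 hEv.symm with hh | hh
          · exact hh
          · exact absurd hh (pow_ne_zero 4 h2rne)
        have hrone : r = 1 := by
          by_contra hne
          have hgt : 1 < r := lt_of_le_of_ne hr1 (Ne.symm hne)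
          nlinarith [pow_pos (by linarith : (0:ℝ) < r - 1) 3,
            mul_pos (mul_pos (by positivity : (0:ℝ) < 4 * r ^ 2)
              (pow_pos (by linarith : (0:ℝ) < r - 1) 3)) (by linarith : (0:ℝ) < r + 1)]
        have hq2 : q = 2 := by rw [hqval, hrone]; norm_num
        rw [eq_div_iff hq1ne, hq2]
        rw [hrone] at hu; linarith
    · intro h
      have hqt1 : (q + 1) * t = 1 := by
        rw [h]; field_simp
      have hB1 : (q + 1) * t - 1 = 0 := by linarith
      have hED : (dena q t - Pa q t) ^ 2 = Da q t := by
        linear_combination Ekey q t + 16 * t * ((q + 1) * t - 1) * ((q - 2) * t + 1) ^ 3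
          * ((4 * q - 5) * t ^ 2 + 2 * t - 1) * hB1
      have hEle : dena q t - Pa q t ≤ 0 := by
        rw [Eval_q q t hq1ne h]
        apply div_nonpos_of_nonpos_of_nonneg _ (by positivity)
        have h3 : (0:ℝ) ≤ (q - 2) ^ 3 := pow_nonneg (by linarith) 3
        nlinarith [mul_nonneg (by linarith : (0:ℝ) ≤ q) h3]
      have hsD : Real.sqrt (Da q t) = -(dena q t - Pa q t) := by
        rw [← hED, Real.sqrt_sq_eq_abs, abs_of_nonpos hEle]
      rw [hNm, hsD, div_eq_one_iff_eq (ne_of_gt hden)]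
      ring
end
end
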